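/- There exist two non-isomorphic tournaments on 5 vertices that have the same reduced deck but different decks. -/
import Mathlib


/-- A finite simple digraph on a vertex type `V`: loopless, and (since
adjacency is a proposition) with at most one arc in each direction between
any two vertices. -/
structure SimpleDigraph (V : Type) where
  Adj : V → V → Prop
  loopless : ∀ v, ¬ Adj v v

/-- The subdigraph induced on a set of vertices. -/
def SimpleDigraph.induce {V : Type} (D : SimpleDigraph V) (s : Set V) :
    SimpleDigraph s where
  Adj a b := D.Adj a b
  loopless v := D.loopless v

/-- Isomorphism of digraphs. -/
def SimpleDigraph.Iso {V W : Type} (D : SimpleDigraph V) (E : SimpleDigraph W) : Prop :=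
  ∃ e : V ≃ W, ∀ a b, D.Adj a b ↔ E.Adj (e a) (e b)

/-- The card of a digraph `D` at a vertex `v`: the subdigraph induced on the
remaining vertices. -/
def digraphCard {n : ℕ} (D : SimpleDigraph (Fin n)) (v : Fin n) :
    SimpleDigraph ({v}ᶜ : Set (Fin n)) :=
  D.induce {v}ᶜ

/-- Two digraphs on `n` vertices have the same reduced deck: every isomorphism
class occurring as a card of one occurs as a card of the other, and vice
versa. -/
def SameReducedDeckD {n : ℕ} (D₁ D₂ : SimpleDigraph (Fin n)) : Prop :=
  (∀ v, ∃ w, (digraphCard D₁ v).Iso (digraphCard D₂ w)) ∧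
  (∀ w, ∃ v, (digraphCard D₁ v).Iso (digraphCard D₂ w))

/-- Two digraphs on `n` vertices have the same (full, multiset) deck: there is
a bijection of the vertex sets matching up the cards, up to isomorphism. -/
def SameDeckD {n : ℕ} (D₁ D₂ : SimpleDigraph (Fin n)) : Prop :=
  ∃ σ : Equiv.Perm (Fin n), ∀ v, (digraphCard D₁ v).Iso (digraphCard D₂ (σ v))

/-- A tournament: every pair of distinct vertices is joined by exactly one
arc, in exactly one direction. -/
def SimpleDigraph.IsTournament {V : Type} (D : SimpleDigraph V) : Prop :=
  ∀ a b : V, a ≠ b → (D.Adj a b ↔ ¬ D.Adj b a)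

/-! ### Auxiliary material for the proof -/


def f1 : Fin 5 → Fin 5 → Bool :=
  ![![false,false,false,false,true],
    ![true,false,false,false,false],
    ![true,true,false,false,false],
    ![true,true,true,false,false],
    ![false,true,true,true,false]]

def f2 : Fin 5 → Fin 5 → Bool :=
  ![![false,false,false,true,true],
    ![true,false,false,false,false],
    ![true,true,false,false,false],
    ![false,true,true,false,false],
    ![false,true,true,true,false]]

def T1 : SimpleDigraph (Fin 5) := ⟨fun i j => f1 i j = true, by decide⟩
def T2 : SimpleDigraph (Fin 5) := ⟨fun i j => f2 i j = true, by decide⟩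

instance : DecidableRel T1.Adj := fun a b => inferInstanceAs (Decidable (f1 a b = true))
instance : DecidableRel T2.Adj := fun a b => inferInstanceAs (Decidable (f2 a b = true))

instance {V : Type} (D : SimpleDigraph V) [DecidableRel D.Adj] (s : Set V) :
    DecidableRel (D.induce s).Adj := fun a b => inferInstanceAs (Decidable (D.Adj a b))

instance {n : ℕ} (D : SimpleDigraph (Fin n)) [DecidableRel D.Adj] (v : Fin n) :
    DecidableRel (digraphCard D v).Adj := fun a b => inferInstanceAs (Decidable (D.Adj a b))

/-- out-degree -/
def outdeg {V : Type} [Fintype V] (D : SimpleDigraph V) [DecidableRel D.Adj] (v : V) : ℕ :=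
  (Finset.univ.filter (fun b => D.Adj v b)).card

/-- multiset of out-degrees -/
def scoreM {V : Type} [Fintype V] (D : SimpleDigraph V) [DecidableRel D.Adj] : Multiset ℕ :=
  Finset.univ.val.map (outdeg D)

lemma outdeg_eq {V W : Type} [Fintype V] [Fintype W]
    (D : SimpleDigraph V) (E : SimpleDigraph W) [DecidableRel D.Adj] [DecidableRel E.Adj]
    (e : V ≃ W) (he : ∀ a b, D.Adj a b ↔ E.Adj (e a) (e b)) (v : V) :
    outdeg D v = outdeg E (e v) := by
  unfold outdeg
  apply Finset.card_bij' (fun b _ => e b) (fun c _ => e.symm c)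
  · intro a ha
    simp only [Finset.mem_filter, Finset.mem_univ, true_and] at *
    exact (he v a).mp ha
  · intro c hc
    simp only [Finset.mem_filter, Finset.mem_univ, true_and] at *
    rw [he v (e.symm c)]
    simpa using hc
  · intro a _; simp
  · intro c _; simp

lemma scoreM_eq {V W : Type} [Fintype W] [DecidableEq W] [Fintype V]
    (D : SimpleDigraph V) (E : SimpleDigraph W) [DecidableRel D.Adj] [DecidableRel E.Adj]
    (h : D.Iso E) : scoreM D = scoreM E := by
  obtain ⟨e, he⟩ := h
  unfold scoreM
  have h1 : Finset.univ.val.map (outdeg D) = Finset.univ.val.map (outdeg E ∘ e) := by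
    apply Multiset.map_congr rfl
    intro v _
    exact outdeg_eq D E e he v
  rw [h1, ← Multiset.map_map]
  congr 1
  have : Finset.univ.map e.toEmbedding = Finset.univ := Finset.map_univ_equiv e
  calc Multiset.map (⇑e) Finset.univ.val = (Finset.univ.map e.toEmbedding).val := rfl
    _ = Finset.univ.val := by rw [this]

lemma card_iso_of_perm {n : ℕ} (D E : SimpleDigraph (Fin n)) (v w : Fin n)
    (τ : Equiv.Perm (Fin n)) (hτ : ∀ a : Fin n, a ≠ v ↔ τ a ≠ w)
    (h : ∀ a b : Fin n, a ≠ v → b ≠ v → (D.Adj a b ↔ E.Adj (τ a) (τ b))) :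
    (digraphCard D v).Iso (digraphCard E w) := by
  refine ⟨Equiv.subtypeEquiv τ (fun a => ?_), fun a b => ?_⟩
  · simpa [Set.mem_compl_iff] using hτ a
  · exact h a b a.2 b.2

def mkPerm (f g : Fin 5 → Fin 5) (h1 : ∀ x, g (f x) = x) (h2 : ∀ x, f (g x) = x) :
    Equiv.Perm (Fin 5) := ⟨f, g, h1, h2⟩

def tau1 : Equiv.Perm (Fin 5) := mkPerm ![2,1,3,4,0] ![4,1,0,2,3] (by decide) (by decide)
def tau2 : Equiv.Perm (Fin 5) := mkPerm ![2,3,1,4,0] ![4,2,0,1,3] (by decide) (by decide)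
def tau3 : Equiv.Perm (Fin 5) := mkPerm ![2,3,4,1,0] ![4,3,0,1,2] (by decide) (by decide)
def tau4 : Equiv.Perm (Fin 5) := mkPerm ![1,2,3,4,0] ![4,0,1,2,3] (by decide) (by decide)
def tau5 : Equiv.Perm (Fin 5) := mkPerm ![0,3,1,2,4] ![0,2,3,1,4] (by decide) (by decide)
def tau6 : Equiv.Perm (Fin 5) := mkPerm ![0,4,1,2,3] ![0,2,3,4,1] (by decide) (by decide)

lemma same_reduced : SameReducedDeckD T1 T2 := by
  constructor
  · intro v
    fin_cases v
    · exact ⟨0, card_iso_of_perm T1 T2 0 0 (Equiv.refl _) (by decide) (by decide)⟩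
    · exact ⟨1, card_iso_of_perm T1 T2 1 1 tau1 (by decide) (by decide)⟩
    · exact ⟨1, card_iso_of_perm T1 T2 2 1 tau2 (by decide) (by decide)⟩
    · exact ⟨1, card_iso_of_perm T1 T2 3 1 tau3 (by decide) (by decide)⟩
    · exact ⟨0, card_iso_of_perm T1 T2 4 0 tau4 (by decide) (by decide)⟩
  · intro w
    fin_cases w
    · exact ⟨0, card_iso_of_perm T1 T2 0 0 (Equiv.refl _) (by decide) (by decide)⟩
    · exact ⟨1, card_iso_of_perm T1 T2 1 1 tau1 (by decide) (by decide)⟩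
    · exact ⟨1, card_iso_of_perm T1 T2 1 2 tau4 (by decide) (by decide)⟩
    · exact ⟨1, card_iso_of_perm T1 T2 1 3 tau5 (by decide) (by decide)⟩
    · exact ⟨1, card_iso_of_perm T1 T2 1 4 tau6 (by decide) (by decide)⟩

def m0 : Multiset ℕ := {0,1,2,3}

set_option maxRecDepth 40000 in
lemma count1 : (Finset.univ.filter (fun v => scoreM (digraphCard T1 v) = m0)).card = 2 := by
  decide

set_option maxRecDepth 40000 in
lemma count2 : (Finset.univ.filter (fun w => scoreM (digraphCard T2 w) = m0)).card = 1 := by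
  decide

lemma not_same_deck : ¬ SameDeckD T1 T2 := by
  rintro ⟨σ, h⟩
  have hM : ∀ v, scoreM (digraphCard T1 v) = scoreM (digraphCard T2 (σ v)) :=
    fun v => scoreM_eq _ _ (h v)
  have hc : (Finset.univ.filter (fun v => scoreM (digraphCard T1 v) = m0)).card
      = (Finset.univ.filter (fun w => scoreM (digraphCard T2 w) = m0)).card := by
    apply Finset.card_bij' (fun v _ => σ v) (fun w _ => σ.symm w)
    · intro v hv
      simp only [Finset.mem_filter, Finset.mem_univ, true_and] at *
      rw [← hM v]; exact hv
    · intro w hw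
      simp only [Finset.mem_filter, Finset.mem_univ, true_and] at *
      rw [hM (σ.symm w), σ.apply_symm_apply]; exact hw
    · intro v _; simp
    · intro w _; simp
  rw [count1, count2] at hc
  exact absurd hc (by norm_num)

set_option maxRecDepth 10000 in
theorem exists_tournaments_five_same_reduced_deck_different_deck :
    ∃ T₁ T₂ : SimpleDigraph (Fin 5),
      T₁.IsTournament ∧ T₂.IsTournament ∧ ¬ T₁.Iso T₂ ∧
      SameReducedDeckD T₁ T₂ ∧ ¬ SameDeckD T₁ T₂ := by
  refine ⟨T1, T2, ?_, ?_, ?_, same_reduced, not_same_deck⟩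
  · intro a b hab; revert hab; revert a b; decide
  · intro a b hab; revert hab; revert a b; decide
  · intro h
    have h2 : scoreM T1 ≠ scoreM T2 := by decide
    exact h2 (scoreM_eq T1 T2 h)
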